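/- For every 0 ≤ l < n and every φ ∈ C^l(X,ℝ), ‖dφ‖² = Σ_{τ ∈ X(l−1)} ( ‖d_τ φ_τ‖² − (l/(l+1)) ‖φ_τ‖² ), where d_τ is the signless differential on cochains of the link X_τ. -/

import Mathlib

/-!
Framework: a pure `n`-dimensional finite weighted simplicial complex, following
Kaufman–Oppenheim, "High Order Random Walks: Beyond Spectral Gap".

A complex is given by its finset of faces (finsets of a vertex type `V`) together with
a weight function `m`.  We index levels by **cardinality**: `X.K c` is the set of faces
with `c` elements, i.e. the set `X(k)` of `k`-dimensional faces for `k = c - 1`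
(so `X(-1) = X.K 0`, and a pure `n`-dimensional complex has top level `X.K (n+1)`).
-/

noncomputable section

open Finset

/-- The data of a weighted simplicial complex: a finite family of faces and a weight. -/
structure WSC (V : Type*) [DecidableEq V] where
  faces : Finset (Finset V)
  m : Finset V → ℝ

namespace WSC

variable {V : Type*} [DecidableEq V]

/-- `X.IsWSC n` : `X` is a pure `n`-dimensional finite weighted simplicial complex:
the faces form a nonempty downward-closed family, every face is contained in a face with
`n+1` elements (and no face has more), the weights are positive, and the weight of every
face of cardinality `≤ n` is the sum of the weights of the faces covering it. -/
def IsWSC (X : WSC V) (n : ℕ) : Prop :=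
  ∅ ∈ X.faces ∧
  (∀ ⦃σ τ : Finset V⦄, σ ∈ X.faces → τ ⊆ σ → τ ∈ X.faces) ∧
  (∀ ⦃σ⦄, σ ∈ X.faces → σ.card ≤ n + 1) ∧
  (∀ ⦃σ⦄, σ ∈ X.faces → ∃ η ∈ X.faces, σ ⊆ η ∧ η.card = n + 1) ∧
  (∀ ⦃σ⦄, σ ∈ X.faces → 0 < X.m σ) ∧
  (∀ ⦃τ⦄, τ ∈ X.faces → τ.card ≤ n →
    X.m τ = ∑ σ ∈ X.faces.filter (fun σ => τ ⊆ σ ∧ σ.card = τ.card + 1), X.m σ)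

/-- `X.K c` : the faces with `c` elements, i.e. `X(c-1)` in dimension indexing. -/
def K (X : WSC V) (c : ℕ) : Finset (Finset V) := X.faces.filter (fun σ => σ.card = c)

/-- The weighted inner product on cochains supported on the faces with `c` elements. -/
def inn (X : WSC V) (c : ℕ) (φ ψ : Finset V → ℝ) : ℝ :=
  ∑ σ ∈ X.K c, X.m σ * (φ σ * ψ σ)

/-- The squared norm of a cochain on the faces with `c` elements. -/
def normSq (X : WSC V) (c : ℕ) (φ : Finset V → ℝ) : ℝ := X.inn c φ φ

/-- The norm of a cochain on the faces with `c` elements. -/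
def norm (X : WSC V) (c : ℕ) (φ : Finset V → ℝ) : ℝ := Real.sqrt (X.normSq c φ)

/-- `X.cochainZero c φ` : φ belongs to `C^{c-1}_0 (X, ℝ)`, i.e. it is orthogonal to the
constant functions at level `c`. -/
def cochainZero (X : WSC V) (c : ℕ) (φ : Finset V → ℝ) : Prop :=
  ∑ σ ∈ X.K c, X.m σ * φ σ = 0

/-- The signless differential, from cochains at level `c` to cochains at level `c+1`:
`(d φ)(σ) = ∑_{τ ∈ X(c-1), τ ⊂ σ} φ(τ)`. -/
def d (X : WSC V) (c : ℕ) (φ : Finset V → ℝ) : Finset V → ℝ :=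
  fun σ => ∑ τ ∈ (X.K c).filter (fun τ => τ ⊆ σ), φ τ

/-- The (explicit formula for the) adjoint of the signless differential, from cochains at
level `c+1` to cochains at level `c`: `(d* ψ)(τ) = ∑_{σ ⊇ τ} (m σ / m τ) ψ(σ)`. -/
def dStar (X : WSC V) (c : ℕ) (ψ : Finset V → ℝ) : Finset V → ℝ :=
  fun τ => ∑ σ ∈ (X.K (c + 1)).filter (fun σ => τ ⊆ σ), (X.m σ / X.m τ) * ψ σ

/-- The (lazy) upper random walk operator `M⁺` on cochains at level `c`
(i.e. on `k`-cochains for `k = c-1`; note `k + 2 = c + 1`). -/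
def Mup (X : WSC V) (c : ℕ) (φ : Finset V → ℝ) : Finset V → ℝ :=
  fun τ => (1 / ((c : ℝ) + 1)) * φ τ +
    ∑ τ' ∈ (X.K c).filter (fun τ' => τ ∪ τ' ∈ X.K (c + 1)),
      (X.m (τ ∪ τ') / (((c : ℝ) + 1) * X.m τ)) * φ τ'

/-- The lower random walk operator `M⁻` on cochains at level `c`
(i.e. on `k`-cochains for `k = c-1`; note `k + 1 = c`). -/
def Mdown (X : WSC V) (c : ℕ) (φ : Finset V → ℝ) : Finset V → ℝ :=
  fun τ => (∑ η ∈ (X.K (c - 1)).filter (fun η => η ⊆ τ), X.m τ / ((c : ℝ) * X.m η)) * φ τ +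
    ∑ τ' ∈ (X.K c).filter (fun τ' => τ' ≠ τ ∧ τ ∩ τ' ∈ X.K (c - 1)),
      (X.m τ' / ((c : ℝ) * X.m (τ ∩ τ'))) * φ τ'

/-- The non-lazy upper random walk operator `(M')⁺ = ((k+2)/(k+1)) M⁺ - (1/(k+1)) I`
on cochains at level `c = k+1`. -/
def Mup' (X : WSC V) (c : ℕ) (φ : Finset V → ℝ) : Finset V → ℝ :=
  fun τ => (((c : ℝ) + 1) / (c : ℝ)) * X.Mup c φ τ - (1 / (c : ℝ)) * φ τ

/-- The link `X_τ` of a face `τ`, with the induced weight `m_τ (η) = m (τ ∪ η)`. -/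
def link (X : WSC V) (τ : Finset V) : WSC V where
  faces := X.faces.filter (fun η => η ∩ τ = ∅ ∧ τ ∪ η ∈ X.faces)
  m := fun η => X.m (τ ∪ η)

/-- The localization `φ_τ (η) = φ (τ ∪ η)` of a cochain `φ` to the link of `τ`. -/
def localize (φ : Finset V → ℝ) (τ : Finset V) : Finset V → ℝ := fun η => φ (τ ∪ η)

/-- The underlying graph (1-skeleton) of a complex. -/
def skeleton (Y : WSC V) : SimpleGraph {v : V // ({v} : Finset V) ∈ Y.faces} where
  Adj u w := u ≠ w ∧ ({(u : V), (w : V)} : Finset V) ∈ Y.faces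
  symm := by
    constructor
    intro u w h
    refine ⟨h.1.symm, ?_⟩
    rw [Finset.pair_comm]
    exact h.2
  loopless := by constructor; intro u h; exact h.1 rfl

/-- All links of `X` of dimension `≥ 1` (including `X` itself, as the link of `∅`)
have a connected underlying graph. -/
def LinksConnected (X : WSC V) (n : ℕ) : Prop :=
  ∀ c < n, ∀ τ ∈ X.K c, (X.link τ).skeleton.Connected

/-- The second largest eigenvalue of the self-adjoint operator `(M')⁺₀` on `C⁰(Y, ℝ)`,
via its Rayleigh-quotient characterization over the orthogonal complement of the
constant functions (the top eigenfunction). -/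
def secondEig (Y : WSC V) : ℝ :=
  sSup {r : ℝ | ∃ ψ : Finset V → ℝ, Y.normSq 1 ψ ≠ 0 ∧
    (∑ v ∈ Y.K 1, Y.m v * ψ v) = 0 ∧ r = Y.inn 1 (Y.Mup' 1 ψ) ψ / Y.normSq 1 ψ}

/-- The smallest eigenvalue of the self-adjoint operator `(M')⁺₀` on `C⁰(Y, ℝ)`,
via its Rayleigh-quotient characterization. -/
def smallestEig (Y : WSC V) : ℝ :=
  sInf {r : ℝ | ∃ ψ : Finset V → ℝ, Y.normSq 1 ψ ≠ 0 ∧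
    r = Y.inn 1 (Y.Mup' 1 ψ) ψ / Y.normSq 1 ψ}

/-- `μ_k = max_{τ ∈ X(k-1)} μ_τ` where `μ_τ` is the second largest eigenvalue of
`(M')⁺_{τ,0}`; faces `τ ∈ X(k-1)` have `k` elements. -/
def mu (X : WSC V) (k : ℕ) : ℝ :=
  sSup {r : ℝ | ∃ τ ∈ X.K k, r = (X.link τ).secondEig}

/-- `ν_k = min_{τ ∈ X(k-1)} ν_τ` where `ν_τ` is the smallest eigenvalue of
`(M')⁺_{τ,0}`; faces `τ ∈ X(k-1)` have `k` elements. -/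
def nu (X : WSC V) (k : ℕ) : ℝ :=
  sInf {r : ℝ | ∃ τ ∈ X.K k, r = (X.link τ).smallestEig}

/-- `X` is a one-sided `λ`-local spectral expander: `μ_k ≤ λ` for every `0 ≤ k ≤ n-1`. -/
def OneSided (X : WSC V) (n : ℕ) (lam : ℝ) : Prop := ∀ k < n, X.mu k ≤ lam

/-- `X` is a two-sided `λ`-local spectral expander: `μ_k ≤ λ` and `ν_k ≥ -λ`
for every `0 ≤ k ≤ n-1`. -/
def TwoSided (X : WSC V) (n : ℕ) (lam : ℝ) : Prop :=
  ∀ k < n, X.mu k ≤ lam ∧ -lam ≤ X.nu k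

end WSC

open WSC

/-!
Expand `‖dφ‖² = ∑_σ m(σ) (∑_{ρ ⊂ σ} φ(ρ))²` into diagonal and off-diagonal parts. Because the
weights are balanced, the diagonal part is `‖φ‖²`. The same expansion holds in every link `X_τ`,
whose weights are balanced as well. Summing over `τ ∈ X(l-1)`, every `ρ ∈ X(l)` occurs in the
diagonal parts once for each of its `l + 1` facets `τ`, which contributes `(l + 1)‖φ‖²`, while
every off-diagonal pair `ρ ≠ ρ'` inside some `σ ∈ X(l+1)` occurs exactly once, in the link of
`τ = ρ ∩ ρ'`.
-/

namespace Finset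

variable {ι R M : Type*} [DecidableEq ι]

theorem sum_mul_sum_self_eq_sum_add_sum_offDiag [CommSemiring R] (s : Finset ι) (f : ι → R) :
    (∑ i ∈ s, f i) * ∑ i ∈ s, f i = ∑ i ∈ s, f i * f i + ∑ p ∈ s.offDiag, f p.1 * f p.2 := by
  rw [sum_mul_sum, ← sum_product', ← diag_union_offDiag, sum_union (disjoint_diag_offDiag s), diag,
    sum_map]
  rfl

theorem card_inter_of_ne_of_subset {σ ρ ρ' : Finset ι} {l : ℕ} (hσ : #σ = l + 2)
    (hρσ : ρ ⊆ σ) (hρ : #ρ = l + 1) (hρ'σ : ρ' ⊆ σ) (hρ' : #ρ' = l + 1) (hne : ρ ≠ ρ') :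
    #(ρ ∩ ρ') = l := by
  have hunion : #(ρ ∪ ρ') = l + 2 := by
    refine le_antisymm (hσ ▸ card_le_card (union_subset hρσ hρ'σ)) ?_
    by_contra! hlt
    have hρ_eq : ρ = ρ ∪ ρ' := eq_of_subset_of_card_le subset_union_left (by omega)
    have hρ'ρ : ρ' ⊆ ρ := hρ_eq ▸ subset_union_right
    exact hne (eq_of_subset_of_card_le hρ'ρ (by omega)).symm
  have := card_union_add_card_inter ρ ρ'
  omega

theorem sum_powersetCard_sum_offDiag_powersetCard_one [AddCommMonoid M] {σ : Finset ι} {l : ℕ}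
    (hσ : #σ = l + 2) (F : Finset ι → Finset ι → M) :
    ∑ τ ∈ σ.powersetCard l, ∑ p ∈ ((σ \ τ).powersetCard 1).offDiag, F (τ ∪ p.1) (τ ∪ p.2) =
      ∑ p ∈ (σ.powersetCard (l + 1)).offDiag, F p.1 p.2 := by
  rw [sum_sigma']
  refine sum_nbij' (fun x => (x.1 ∪ x.2.1, x.1 ∪ x.2.2))
    (fun p => ⟨p.1 ∩ p.2, p.1 \ p.2, p.2 \ p.1⟩) ?_ ?_ ?_ ?_ fun _ _ => rfl
  · rintro ⟨τ, v, v'⟩ h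
    simp only [mem_sigma, mem_offDiag, mem_powersetCard, card_eq_one] at h
    obtain ⟨⟨hτσ, hτ⟩, ⟨hv, a, rfl⟩, ⟨hv', b, rfl⟩, hab⟩ := h
    simp only [singleton_subset_iff, mem_sdiff, ne_eq, singleton_inj] at hv hv' hab
    simp only [mem_offDiag, mem_powersetCard]
    refine ⟨⟨by grind, by grind⟩, ⟨by grind, by grind⟩, fun h => ?_⟩
    have := h ▸ mem_union_right τ (mem_singleton_self a)
    grind
  · rintro ⟨ρ, ρ'⟩ h
    simp only [mem_offDiag, mem_powersetCard] at h
    obtain ⟨⟨hρσ, hρ⟩, ⟨hρ'σ, hρ'⟩, hne⟩ := h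
    have hinter := card_inter_of_ne_of_subset hσ hρσ hρ hρ'σ hρ' hne
    have hsdiff : ∀ {s t : Finset ι}, #(s ∩ t) = l → #s = l + 1 → #(s \ t) = 1 := by
      intro s t hst hs
      rw [card_sdiff, inter_comm, hst, hs, add_tsub_cancel_left]
    obtain ⟨a, ha⟩ := card_eq_one.mp (hsdiff hinter hρ)
    simp only [mem_sigma, mem_offDiag, mem_powersetCard]
    refine ⟨⟨inter_subset_left.trans hρσ, hinter⟩, ⟨sdiff_subset_sdiff hρσ inter_subset_right,
      hsdiff hinter hρ⟩, ⟨sdiff_subset_sdiff hρ'σ inter_subset_left,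
      hsdiff (inter_comm ρ ρ' ▸ hinter) hρ'⟩, fun h => ?_⟩
    have hdisj : Disjoint (ρ \ ρ') (ρ' \ ρ) := disjoint_sdiff_sdiff
    rw [← h, ha] at hdisj
    simp at hdisj
  · rintro ⟨τ, v, v'⟩ h
    simp only [mem_sigma, mem_offDiag, mem_powersetCard, card_eq_one] at h
    obtain ⟨⟨hτσ, hτ⟩, ⟨hv, a, rfl⟩, ⟨hv', b, rfl⟩, hab⟩ := h
    simp only [singleton_subset_iff, mem_sdiff, ne_eq, singleton_inj] at hv hv' hab
    simp only [Sigma.mk.injEq]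
    refine ⟨?_, heq_of_eq ?_⟩
    · ext x; simp only [mem_inter, mem_union, mem_singleton]; grind
    · ext x <;> simp only [mem_sdiff, mem_union, mem_singleton] <;> grind
  · rintro ⟨ρ, ρ'⟩ -
    simp only [Prod.mk.injEq]
    exact ⟨(union_comm ..).trans (sdiff_union_inter ..),
      inter_comm ρ ρ' ▸ (union_comm ..).trans (sdiff_union_inter ..)⟩

end Finset

namespace WSC

variable {V : Type*} [DecidableEq V]

def IsDownwardClosed (X : WSC V) : Prop :=
  ∀ ⦃σ τ : Finset V⦄, σ ∈ X.faces → τ ⊆ σ → τ ∈ X.faces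

def IsBalanced (X : WSC V) (c : ℕ) : Prop :=
  ∀ ρ ∈ X.K c, X.m ρ = ∑ σ ∈ (X.K (c + 1)).filter (ρ ⊆ ·), X.m σ

def crossTerm (X : WSC V) (c : ℕ) (φ : Finset V → ℝ) : ℝ :=
  ∑ σ ∈ X.K (c + 1), X.m σ * ∑ p ∈ ((X.K c).filter (· ⊆ σ)).offDiag, φ p.1 * φ p.2

variable {X : WSC V}

theorem mem_K {c : ℕ} {σ : Finset V} : σ ∈ X.K c ↔ σ ∈ X.faces ∧ #σ = c := mem_filter

theorem normSq_d_eq_normSq_add_crossTerm {c : ℕ} (hb : X.IsBalanced c) (φ : Finset V → ℝ) :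
    X.normSq (c + 1) (X.d c φ) = X.normSq c φ + X.crossTerm c φ := by
  have hdiag : ∑ σ ∈ X.K (c + 1), X.m σ * ∑ ρ ∈ (X.K c).filter (· ⊆ σ), φ ρ * φ ρ =
      X.normSq c φ := by
    simp_rw [mul_sum]
    rw [sum_comm' (t' := X.K c) (s' := fun ρ => (X.K (c + 1)).filter (ρ ⊆ ·))
      (by intros; simp only [mem_filter]; tauto)]
    refine sum_congr rfl fun ρ hρ => ?_
    rw [← sum_mul, ← hb ρ hρ]
  simp only [normSq, inn, d, crossTerm, sum_mul_sum_self_eq_sum_add_sum_offDiag, mul_add,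
    sum_add_distrib, hdiag]

theorem IsWSC.isDownwardClosed {n : ℕ} (hX : X.IsWSC n) : X.IsDownwardClosed := hX.2.1

theorem IsWSC.isBalanced {n c : ℕ} (hX : X.IsWSC n) (hc : c ≤ n) : X.IsBalanced c := by
  obtain ⟨-, -, -, -, -, hweight⟩ := hX
  intro ρ hρ
  rw [mem_K] at hρ
  rw [hweight hρ.1 (hρ.2 ▸ hc)]
  congr 1
  ext σ
  simp only [mem_filter, mem_K, hρ.2]
  tauto

namespace IsDownwardClosed

theorem mem_link_K (hX : X.IsDownwardClosed) {τ η : Finset V} {c : ℕ} :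
    η ∈ (X.link τ).K c ↔ Disjoint τ η ∧ τ ∪ η ∈ X.faces ∧ #η = c := by
  simp only [K, link, mem_filter, disjoint_iff_inter_eq_empty, inter_comm τ]
  exact ⟨fun h => ⟨h.1.2.1, h.1.2.2, h.2⟩,
    fun h => ⟨⟨hX h.2.1 subset_union_right, h.1, h.2.1⟩, h.2.2⟩⟩

theorem union_mem_K_of_mem_link_K (hX : X.IsDownwardClosed) {τ η : Finset V} {l c : ℕ}
    (hτ : #τ = l) (hη : η ∈ (X.link τ).K c) : τ ∪ η ∈ X.K (l + c) := by
  obtain ⟨hτη, hτηf, hηc⟩ := hX.mem_link_K.1 hη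
  exact mem_K.2 ⟨hτηf, by rw [card_union_of_disjoint hτη, hτ, hηc]⟩

theorem sdiff_mem_link_K (hX : X.IsDownwardClosed) {σ τ : Finset V} {l c : ℕ}
    (hσ : σ ∈ X.K (l + c)) (hτσ : τ ⊆ σ) (hτ : #τ = l) : σ \ τ ∈ (X.link τ).K c := by
  obtain ⟨hσf, hσc⟩ := mem_K.1 hσ
  refine hX.mem_link_K.2 ⟨disjoint_sdiff, by rwa [union_sdiff_of_subset hτσ], ?_⟩
  rw [card_sdiff_of_subset hτσ, hσc, hτ, add_tsub_cancel_left]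

theorem filter_K_subset (hX : X.IsDownwardClosed) {σ : Finset V} (hσ : σ ∈ X.faces) (c : ℕ) :
    (X.K c).filter (· ⊆ σ) = σ.powersetCard c := by
  ext ρ
  simp only [mem_filter, mem_K, mem_powersetCard]
  exact ⟨fun h => ⟨h.2, h.1.2⟩, fun h => ⟨⟨hX hσ h.1, h.2⟩, h.1⟩⟩

theorem filter_link_K_subset (hX : X.IsDownwardClosed) {σ τ : Finset V} (hσ : σ ∈ X.faces)
    (hτσ : τ ⊆ σ) (c : ℕ) :
    ((X.link τ).K c).filter (· ⊆ σ \ τ) = (σ \ τ).powersetCard c := by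
  ext η
  simp only [mem_filter, hX.mem_link_K, mem_powersetCard]
  refine ⟨fun h => ⟨h.2, h.1.2.2⟩, fun h => ⟨⟨?_, ?_, h.2⟩, h.1⟩⟩
  · exact disjoint_of_subset_right h.1 disjoint_sdiff
  · exact hX hσ (union_subset hτσ (h.1.trans sdiff_subset))

theorem sum_K_sum_link_K (hX : X.IsDownwardClosed) {M : Type*} [AddCommMonoid M] (l c : ℕ)
    (g : Finset V → Finset V → M) :
    ∑ τ ∈ X.K l, ∑ η ∈ (X.link τ).K c, g τ η =
      ∑ σ ∈ X.K (l + c), ∑ τ ∈ σ.powersetCard l, g τ (σ \ τ) := by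
  rw [sum_sigma', sum_sigma']
  refine sum_nbij' (fun x => ⟨x.1 ∪ x.2, x.1⟩) (fun y => ⟨y.2, y.1 \ y.2⟩) ?_ ?_ ?_ ?_ ?_
  · rintro ⟨τ, η⟩ h
    simp only [mem_sigma, mem_powersetCard] at h ⊢
    have hτ := (mem_K.1 h.1).2
    exact ⟨hX.union_mem_K_of_mem_link_K hτ h.2, subset_union_left, hτ⟩
  · rintro ⟨σ, τ⟩ h
    simp only [mem_sigma, mem_powersetCard] at h ⊢
    exact ⟨mem_K.2 ⟨hX (mem_K.1 h.1).1 h.2.1, h.2.2⟩, hX.sdiff_mem_link_K h.1 h.2.1 h.2.2⟩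
  · rintro ⟨τ, η⟩ h
    simp only [mem_sigma] at h
    simp only [union_sdiff_cancel_left (hX.mem_link_K.1 h.2).1]
  · rintro ⟨σ, τ⟩ h
    simp only [mem_sigma, mem_powersetCard] at h
    simp only [union_sdiff_of_subset h.2.1]
  · rintro ⟨τ, η⟩ h
    simp only [mem_sigma] at h
    simp only [union_sdiff_cancel_left (hX.mem_link_K.1 h.2).1]

theorem sum_normSq_link (hX : X.IsDownwardClosed) (l : ℕ) (φ : Finset V → ℝ) :
    ∑ τ ∈ X.K l, (X.link τ).normSq 1 (localize φ τ) = (l + 1) * X.normSq (l + 1) φ := by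
  calc ∑ τ ∈ X.K l, (X.link τ).normSq 1 (localize φ τ)
      = ∑ τ ∈ X.K l, ∑ η ∈ (X.link τ).K 1, X.m (τ ∪ η) * (φ (τ ∪ η) * φ (τ ∪ η)) := rfl
    _ = ∑ σ ∈ X.K (l + 1), ∑ τ ∈ σ.powersetCard l,
          X.m (τ ∪ (σ \ τ)) * (φ (τ ∪ (σ \ τ)) * φ (τ ∪ (σ \ τ))) :=
        hX.sum_K_sum_link_K l 1 _
    _ = ∑ σ ∈ X.K (l + 1), (l + 1) * (X.m σ * (φ σ * φ σ)) := by
        refine sum_congr rfl fun σ hσ => ?_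
        rw [sum_congr rfl fun τ hτ => by rw [union_sdiff_of_subset (mem_powersetCard.1 hτ).1],
          sum_const, card_powersetCard, (mem_K.1 hσ).2, Nat.choose_succ_self_right, nsmul_eq_mul]
        push_cast
        rfl
    _ = (l + 1) * X.normSq (l + 1) φ := (mul_sum ..).symm

theorem sum_crossTerm_link (hX : X.IsDownwardClosed) (l : ℕ) (φ : Finset V → ℝ) :
    ∑ τ ∈ X.K l, (X.link τ).crossTerm 1 (localize φ τ) = X.crossTerm (l + 1) φ := by
  calc ∑ τ ∈ X.K l, (X.link τ).crossTerm 1 (localize φ τ)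
      = ∑ τ ∈ X.K l, ∑ η ∈ (X.link τ).K 2, X.m (τ ∪ η) *
          ∑ p ∈ (((X.link τ).K 1).filter (· ⊆ η)).offDiag, φ (τ ∪ p.1) * φ (τ ∪ p.2) := rfl
    _ = ∑ σ ∈ X.K (l + 2), ∑ τ ∈ σ.powersetCard l, X.m (τ ∪ (σ \ τ)) *
          ∑ p ∈ (((X.link τ).K 1).filter (· ⊆ σ \ τ)).offDiag, φ (τ ∪ p.1) * φ (τ ∪ p.2) :=
        hX.sum_K_sum_link_K l 2 _
    _ = ∑ σ ∈ X.K (l + 2), X.m σ * ∑ p ∈ (σ.powersetCard (l + 1)).offDiag, φ p.1 * φ p.2 := by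
        refine sum_congr rfl fun σ hσ => ?_
        obtain ⟨hσf, hσc⟩ := mem_K.1 hσ
        rw [← sum_powersetCard_sum_offDiag_powersetCard_one hσc fun ρ ρ' => φ ρ * φ ρ', mul_sum]
        refine sum_congr rfl fun τ hτ => ?_
        have hτσ := (mem_powersetCard.1 hτ).1
        rw [union_sdiff_of_subset hτσ, hX.filter_link_K_subset hσf hτσ]
    _ = X.crossTerm (l + 1) φ :=
        sum_congr rfl fun σ hσ => by rw [hX.filter_K_subset (mem_K.1 hσ).1]

end IsDownwardClosed

theorem IsWSC.isBalanced_link {n l c : ℕ} (hX : X.IsWSC n) {τ : Finset V} (hτ : #τ = l)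
    (hlc : l + c ≤ n) : (X.link τ).IsBalanced c := by
  have hdc := hX.isDownwardClosed
  intro η hη
  have hτη := hdc.union_mem_K_of_mem_link_K hτ hη
  have hdisj := (hdc.mem_link_K.1 hη).1
  rw [show (X.link τ).m η = X.m (τ ∪ η) from rfl, hX.isBalanced hlc _ hτη]
  refine sum_nbij' (· \ τ) (τ ∪ ·) ?_ ?_ ?_ ?_ ?_
  · intro σ hσ
    simp only [mem_filter] at hσ ⊢
    exact ⟨hdc.sdiff_mem_link_K hσ.1 (subset_union_left.trans hσ.2) hτ,
      subset_sdiff.2 ⟨subset_union_right.trans hσ.2, hdisj.symm⟩⟩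
  · intro ζ hζ
    simp only [mem_filter] at hζ ⊢
    exact ⟨hdc.union_mem_K_of_mem_link_K (c := c + 1) hτ hζ.1, union_subset_union_right hζ.2⟩
  · intro σ hσ
    simp only [mem_filter] at hσ
    exact union_sdiff_of_subset (subset_union_left.trans hσ.2)
  · intro ζ hζ
    simp only [mem_filter] at hζ
    exact union_sdiff_cancel_left (hdc.mem_link_K.1 hζ.1).1
  · intro σ hσ
    simp only [mem_filter] at hσ
    show X.m σ = X.m (τ ∪ (σ \ τ))
    rw [union_sdiff_of_subset (subset_union_left.trans hσ.2)]

end WSC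

/-- For every `0 ≤ l < n` and every `φ ∈ C^l(X,ℝ)`,
`‖dφ‖² = Σ_{τ ∈ X(l-1)} ( ‖d_τ φ_τ‖² - (l/(l+1)) ‖φ_τ‖² )`, where `d_τ` is the signless
differential of the link `X_τ`. (Here `φ` lives at cardinality level `l + 1`, `τ` ranges
over `X(l-1)`, i.e. level `l`, and `φ_τ ∈ C⁰(X_τ,ℝ)` lives at link level `1`.) -/
theorem d_normSq_via_links {V : Type*} [DecidableEq V] (X : WSC V) (n : ℕ)
    (hX : X.IsWSC n) (l : ℕ) (hl : l < n) (φ : Finset V → ℝ) :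
    X.normSq (l + 2) (X.d (l + 1) φ) =
      ∑ τ ∈ X.K l,
        ((X.link τ).normSq 2 ((X.link τ).d 1 (localize φ τ)) -
          ((l : ℝ) / ((l : ℝ) + 1)) * (X.link τ).normSq 1 (localize φ τ)) := by
  have hdc := hX.isDownwardClosed
  have hlink (τ) (hτ : τ ∈ X.K l) :
      (X.link τ).normSq 2 ((X.link τ).d 1 (localize φ τ)) =
        (X.link τ).normSq 1 (localize φ τ) + (X.link τ).crossTerm 1 (localize φ τ) :=
    normSq_d_eq_normSq_add_crossTerm (hX.isBalanced_link (mem_K.1 hτ).2 hl) _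
  rw [sum_congr rfl fun τ hτ => by rw [hlink τ hτ], sum_sub_distrib, sum_add_distrib, ← mul_sum,
    hdc.sum_normSq_link, hdc.sum_crossTerm_link]
  rw [show l + 2 = l + 1 + 1 from rfl, normSq_d_eq_normSq_add_crossTerm (hX.isBalanced hl)]
  field_simp
  ring
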